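/- Let m : ℝ → ℝ be smooth, ε ∈ ℝ, Ω ⊆ ℝ³ open, and w : Ω → ℝ a smooth solution of the linear wave equation w_xx = w_tt on Ω. Define Φ(x,y,t) = (x − ε m(w(x,y,t)), y, t) and suppose Φ is a bijection of Ω onto an open set Ω̄ with smooth inverse, and 1 − ε m'(w) w_x ≠ 0 on Ω. Let u = w ∘ Φ⁻¹ : Ω̄ → ℝ. Then 1 + ε m'(u) u_x ≠ 0 everywhere on Ω̄, and u satisfies the nonlinear wave equation ∂/∂x [ (ε m'(u) u_t² + u_x) / (1 + ε m'(u) u_x) ] = u_tt on Ω̄, where subscripts denote partial derivatives with respect to the first and third arguments. -/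

import Mathlib

/- STATEMENT 11: pushing a solution w of the plane wave equation w_xx = w_tt
through the point transformation x̄ = x − ε m(w), ȳ = y, t̄ = t yields a solution
u of the nonlinear equation ∂/∂x[(ε m'(u)u_t² + u_x)/(1 + ε m'(u)u_x)] = u_tt. -/

noncomputable section

/-- Partial derivative with respect to the first variable (x) of a function on ℝ³. -/
def pdx (f : ℝ × ℝ × ℝ → ℝ) (p : ℝ × ℝ × ℝ) : ℝ :=
  deriv (fun s => f (s, p.2.1, p.2.2)) p.1

/-- Partial derivative with respect to the second variable (y). -/
def pdy (f : ℝ × ℝ × ℝ → ℝ) (p : ℝ × ℝ × ℝ) : ℝ :=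
  deriv (fun s => f (p.1, s, p.2.2)) p.2.1

/-- Partial derivative with respect to the third variable (t). -/
def pdt (f : ℝ × ℝ × ℝ → ℝ) (p : ℝ × ℝ × ℝ) : ℝ :=
  deriv (fun s => f (p.1, p.2.1, s)) p.2.2

/-- The push-forward ū = w ∘ Ψ of w under the inverse point transformation. -/
def Ubar (w : ℝ × ℝ × ℝ → ℝ) (Ψ : ℝ × ℝ × ℝ → ℝ × ℝ × ℝ) : ℝ × ℝ × ℝ → ℝ :=
  fun q => w (Ψ q)


open Filter Topology
open scoped ContDiff

lemma sliceX_hasDerivAt (p : ℝ × ℝ × ℝ) :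
    HasDerivAt (fun s : ℝ => ((s, p.2.1, p.2.2) : ℝ × ℝ × ℝ)) (1, 0, 0) p.1 :=
  (hasDerivAt_id p.1).prodMk ((hasDerivAt_const _ _).prodMk (hasDerivAt_const _ _))

lemma sliceT_hasDerivAt (p : ℝ × ℝ × ℝ) :
    HasDerivAt (fun s : ℝ => ((p.1, p.2.1, s) : ℝ × ℝ × ℝ)) (0, 0, 1) p.2.2 :=
  (hasDerivAt_const _ _).prodMk ((hasDerivAt_const _ _).prodMk (hasDerivAt_id _))

lemma hasDerivAt_pdx {f : ℝ × ℝ × ℝ → ℝ} {p : ℝ × ℝ × ℝ} (hf : DifferentiableAt ℝ f p) :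
    HasDerivAt (fun s => f (s, p.2.1, p.2.2)) (fderiv ℝ f p (1, 0, 0)) p.1 :=
  hf.hasFDerivAt.comp_hasDerivAt p.1 (sliceX_hasDerivAt p)

lemma hasDerivAt_pdt {f : ℝ × ℝ × ℝ → ℝ} {p : ℝ × ℝ × ℝ} (hf : DifferentiableAt ℝ f p) :
    HasDerivAt (fun s => f (p.1, p.2.1, s)) (fderiv ℝ f p (0, 0, 1)) p.2.2 :=
  hf.hasFDerivAt.comp_hasDerivAt p.2.2 (sliceT_hasDerivAt p)

lemma pdx_eq {f : ℝ × ℝ × ℝ → ℝ} {p : ℝ × ℝ × ℝ} (hf : DifferentiableAt ℝ f p) :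
    pdx f p = fderiv ℝ f p (1, 0, 0) := (hasDerivAt_pdx hf).deriv

lemma pdt_eq {f : ℝ × ℝ × ℝ → ℝ} {p : ℝ × ℝ × ℝ} (hf : DifferentiableAt ℝ f p) :
    pdt f p = fderiv ℝ f p (0, 0, 1) := (hasDerivAt_pdt hf).deriv

lemma tendsto_sliceX (p : ℝ × ℝ × ℝ) :
    Tendsto (fun s : ℝ => ((s, p.2.1, p.2.2) : ℝ × ℝ × ℝ)) (𝓝 p.1) (𝓝 p) := by
  have : ContinuousAt (fun s : ℝ => ((s, p.2.1, p.2.2) : ℝ × ℝ × ℝ)) p.1 := by fun_prop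
  simpa using this.tendsto

lemma tendsto_sliceT (p : ℝ × ℝ × ℝ) :
    Tendsto (fun s : ℝ => ((p.1, p.2.1, s) : ℝ × ℝ × ℝ)) (𝓝 p.2.2) (𝓝 p) := by
  have : ContinuousAt (fun s : ℝ => ((p.1, p.2.1, s) : ℝ × ℝ × ℝ)) p.2.2 := by fun_prop
  simpa using this.tendsto

lemma pdx_congr {f g : ℝ × ℝ × ℝ → ℝ} {p : ℝ × ℝ × ℝ} (h : f =ᶠ[𝓝 p] g) :
    pdx f p = pdx g p :=
  Filter.EventuallyEq.deriv_eq (h.comp_tendsto (tendsto_sliceX p))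

lemma pdt_congr {f g : ℝ × ℝ × ℝ → ℝ} {p : ℝ × ℝ × ℝ} (h : f =ᶠ[𝓝 p] g) :
    pdt f p = pdt g p :=
  Filter.EventuallyEq.deriv_eq (h.comp_tendsto (tendsto_sliceT p))

lemma pdx_congr_of_open {f g : ℝ × ℝ × ℝ → ℝ} {p : ℝ × ℝ × ℝ} {U : Set (ℝ × ℝ × ℝ)}
    (hU : IsOpen U) (hp : p ∈ U) (h : ∀ r ∈ U, f r = g r) : pdx f p = pdx g p :=
  pdx_congr (Filter.eventuallyEq_of_mem (hU.mem_nhds hp) h)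

lemma pdt_congr_of_open {f g : ℝ × ℝ × ℝ → ℝ} {p : ℝ × ℝ × ℝ} {U : Set (ℝ × ℝ × ℝ)}
    (hU : IsOpen U) (hp : p ∈ U) (h : ∀ r ∈ U, f r = g r) : pdt f p = pdt g p :=
  pdt_congr (Filter.eventuallyEq_of_mem (hU.mem_nhds hp) h)

lemma contDiffOn_fderiv_apply {w : ℝ × ℝ × ℝ → ℝ} {Ω : Set (ℝ × ℝ × ℝ)}
    (hw : ContDiffOn ℝ (⊤ : ℕ∞) w Ω) (hΩ : IsOpen Ω) (v : ℝ × ℝ × ℝ) :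
    ContDiffOn ℝ (⊤ : ℕ∞) (fun p => fderiv ℝ w p v) Ω :=
  (hw.fderiv_of_isOpen hΩ (by simp)).clm_apply contDiffOn_const

lemma fderiv_fderiv_apply {w : ℝ × ℝ × ℝ → ℝ} {Ω : Set (ℝ × ℝ × ℝ)}
    (hw : ContDiffOn ℝ (⊤ : ℕ∞) w Ω) (hΩ : IsOpen Ω) {p : ℝ × ℝ × ℝ} (hp : p ∈ Ω)
    (v u : ℝ × ℝ × ℝ) :
    fderiv ℝ (fun p' => fderiv ℝ w p' v) p u = fderiv ℝ (fderiv ℝ w) p u v := by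
  have hd : DifferentiableAt ℝ (fderiv ℝ w) p :=
    (((hw.fderiv_of_isOpen hΩ (WithTop.coe_le_coe.mpr le_top)).differentiableOn (by norm_num : (1 : WithTop ℕ∞) ≠ 0))).differentiableAt
      (hΩ.mem_nhds hp)
  have hc := (ContinuousLinearMap.apply ℝ ℝ v).hasFDerivAt.comp p hd.hasFDerivAt
  have : fderiv ℝ (fun p' => fderiv ℝ w p' v) p =
      (ContinuousLinearMap.apply ℝ ℝ v).comp (fderiv ℝ (fderiv ℝ w) p) := hc.fderiv
  rw [this]; rfl

lemma mixed_symm {w : ℝ × ℝ × ℝ → ℝ} {Ω : Set (ℝ × ℝ × ℝ)}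
    (hw : ContDiffOn ℝ (⊤ : ℕ∞) w Ω) (hΩ : IsOpen Ω) {p : ℝ × ℝ × ℝ} (hp : p ∈ Ω)
    (v u : ℝ × ℝ × ℝ) :
    fderiv ℝ (fun p' => fderiv ℝ w p' v) p u = fderiv ℝ (fun p' => fderiv ℝ w p' u) p v := by
  rw [fderiv_fderiv_apply hw hΩ hp, fderiv_fderiv_apply hw hΩ hp]
  exact (hw.contDiffAt (hΩ.mem_nhds hp)).isSymmSndFDerivAt (by rw [minSmoothness_of_isRCLikeNormedField]; exact WithTop.coe_le_coe.mpr le_top) u v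

lemma chain_slices {m : ℝ → ℝ} (hm : ContDiff ℝ (⊤ : ℕ∞) m) (ε : ℝ)
    {Ω : Set (ℝ × ℝ × ℝ)} (hΩ : IsOpen Ω)
    {w : ℝ × ℝ × ℝ → ℝ} (hw : ContDiffOn ℝ (⊤ : ℕ∞) w Ω)
    {Φ : ℝ × ℝ × ℝ → ℝ × ℝ × ℝ}
    (hΦ : ∀ p : ℝ × ℝ × ℝ, Φ p = (p.1 - ε * m (w p), p.2.1, p.2.2))
    {g : ℝ × ℝ × ℝ → ℝ} {p : ℝ × ℝ × ℝ} (hp : p ∈ Ω)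
    (hg : DifferentiableAt ℝ g (Φ p)) :
    pdx (fun r => g (Φ r)) p
      = (1 - ε * deriv m (w p) * fderiv ℝ w p (1, 0, 0)) * pdx g (Φ p) ∧
    pdt (fun r => g (Φ r)) p
      = -(ε * deriv m (w p) * fderiv ℝ w p (0, 0, 1)) * pdx g (Φ p) + pdt g (Φ p) := by
  have hwp : DifferentiableAt ℝ w p :=
    (hw.differentiableOn (by simp)).differentiableAt (hΩ.mem_nhds hp)
  have hmd : HasDerivAt m (deriv m (w p)) (w p) :=
    ((hm.differentiable (by simp)) (w p)).hasDerivAt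
  set Wx := fderiv ℝ w p (1, 0, 0) with hWx
  set Wt := fderiv ℝ w p (0, 0, 1) with hWt
  set D := 1 - ε * deriv m (w p) * Wx with hDdef
  set C := ε * deriv m (w p) * Wt with hCdef
  have hgf : HasFDerivAt g (fderiv ℝ g (Φ p)) (Φ p) := hg.hasFDerivAt
  rw [hΦ p] at hgf
  constructor
  · -- x slice
    have h1 : HasDerivAt (fun s => w (s, p.2.1, p.2.2)) Wx p.1 := hasDerivAt_pdx hwp
    have h2 : HasDerivAt (fun s => m (w (s, p.2.1, p.2.2))) (deriv m (w p) * Wx) p.1 :=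
      hmd.comp p.1 h1
    have h3 : HasDerivAt (fun s => s - ε * m (w (s, p.2.1, p.2.2)))
        (1 - ε * (deriv m (w p) * Wx)) p.1 := (hasDerivAt_id p.1).sub (h2.const_mul ε)
    have h4 : HasDerivAt
        (fun s : ℝ => ((s - ε * m (w (s, p.2.1, p.2.2)), p.2.1, p.2.2) : ℝ × ℝ × ℝ))
        ((1 - ε * (deriv m (w p) * Wx), 0, 0) : ℝ × ℝ × ℝ) p.1 :=
      h3.prodMk ((hasDerivAt_const _ _).prodMk (hasDerivAt_const _ _))
    have h5 := hgf.comp_hasDerivAt p.1 h4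
    have h6 : HasDerivAt (fun s => g (Φ (s, p.2.1, p.2.2)))
        (fderiv ℝ g (p.1 - ε * m (w p), p.2.1, p.2.2)
          ((1 - ε * (deriv m (w p) * Wx), 0, 0) : ℝ × ℝ × ℝ)) p.1 := by
      simp only [hΦ]; exact h5
    have h7 : pdx (fun r => g (Φ r)) p
        = fderiv ℝ g (p.1 - ε * m (w p), p.2.1, p.2.2)
            ((1 - ε * (deriv m (w p) * Wx), 0, 0) : ℝ × ℝ × ℝ) := h6.deriv
    have hvec : ((1 - ε * (deriv m (w p) * Wx), 0, 0) : ℝ × ℝ × ℝ)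
        = (1 - ε * (deriv m (w p) * Wx)) • ((1, 0, 0) : ℝ × ℝ × ℝ) := by
      simp [Prod.smul_def]
    have hgΦ : DifferentiableAt ℝ g ((p.1 - ε * m (w p), p.2.1, p.2.2) : ℝ × ℝ × ℝ) := by
      rw [← hΦ p]; exact hg
    rw [h7, hvec, map_smul, smul_eq_mul, hΦ p, ← pdx_eq hgΦ, hDdef]
    ring_nf
  · -- t slice
    have h1 : HasDerivAt (fun s => w (p.1, p.2.1, s)) Wt p.2.2 := hasDerivAt_pdt hwp
    have h2 : HasDerivAt (fun s => m (w (p.1, p.2.1, s))) (deriv m (w p) * Wt) p.2.2 :=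
      hmd.comp p.2.2 h1
    have h3 : HasDerivAt (fun s => p.1 - ε * m (w (p.1, p.2.1, s)))
        (0 - ε * (deriv m (w p) * Wt)) p.2.2 := (hasDerivAt_const _ _).sub (h2.const_mul ε)
    have h4 : HasDerivAt
        (fun s : ℝ => ((p.1 - ε * m (w (p.1, p.2.1, s)), p.2.1, s) : ℝ × ℝ × ℝ))
        ((0 - ε * (deriv m (w p) * Wt), 0, 1) : ℝ × ℝ × ℝ) p.2.2 :=
      h3.prodMk ((hasDerivAt_const _ _).prodMk (hasDerivAt_id _))
    have h5 := hgf.comp_hasDerivAt p.2.2 h4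
    have h6 : HasDerivAt (fun s => g (Φ (p.1, p.2.1, s)))
        (fderiv ℝ g (p.1 - ε * m (w p), p.2.1, p.2.2)
          ((0 - ε * (deriv m (w p) * Wt), 0, 1) : ℝ × ℝ × ℝ)) p.2.2 := by
      simp only [hΦ]; exact h5
    have h7 : pdt (fun r => g (Φ r)) p
        = fderiv ℝ g (p.1 - ε * m (w p), p.2.1, p.2.2)
            ((0 - ε * (deriv m (w p) * Wt), 0, 1) : ℝ × ℝ × ℝ) := h6.deriv
    have hvec : ((0 - ε * (deriv m (w p) * Wt), 0, 1) : ℝ × ℝ × ℝ)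
        = (-(ε * (deriv m (w p) * Wt))) • ((1, 0, 0) : ℝ × ℝ × ℝ)
          + ((0, 0, 1) : ℝ × ℝ × ℝ) := by
      simp [Prod.smul_def]
    have hgΦ : DifferentiableAt ℝ g ((p.1 - ε * m (w p), p.2.1, p.2.2) : ℝ × ℝ × ℝ) := by
      rw [← hΦ p]; exact hg
    rw [h7, hvec, map_add, map_smul, smul_eq_mul, hΦ p, ← pdx_eq hgΦ, ← pdt_eq hgΦ, hCdef]
    ring_nf

theorem stmt_11
    (m : ℝ → ℝ) (hm : ContDiff ℝ (⊤ : ℕ∞) m) (ε : ℝ)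
    (Ω Ωb : Set (ℝ × ℝ × ℝ)) (hΩ : IsOpen Ω) (hΩb : IsOpen Ωb)
    (w : ℝ × ℝ × ℝ → ℝ) (hw : ContDiffOn ℝ (⊤ : ℕ∞) w Ω)
    -- w solves the linear wave equation w_xx = w_tt on Ω
    (hwave : ∀ p ∈ Ω, pdx (pdx w) p = pdt (pdt w) p)
    (Φ Ψ : ℝ × ℝ × ℝ → ℝ × ℝ × ℝ)
    (hΦ : ∀ p : ℝ × ℝ × ℝ, Φ p = (p.1 - ε * m (w p), p.2.1, p.2.2))
    (himage : Φ '' Ω = Ωb)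
    (hΨ : ContDiffOn ℝ (⊤ : ℕ∞) Ψ Ωb)
    (hleft : ∀ p ∈ Ω, Ψ (Φ p) = p)
    (hright : ∀ q ∈ Ωb, Φ (Ψ q) = q)
    (hD : ∀ p ∈ Ω, 1 - ε * deriv m (w p) * pdx w p ≠ 0) :
    -- with u = w ∘ Φ⁻¹ = w ∘ Ψ :
    ∀ q ∈ Ωb,
      1 + ε * deriv m (Ubar w Ψ q) * pdx (Ubar w Ψ) q ≠ 0 ∧
      pdx (fun r =>
          (ε * deriv m (Ubar w Ψ r) * (pdt (Ubar w Ψ) r) ^ 2 + pdx (Ubar w Ψ) r)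
            / (1 + ε * deriv m (Ubar w Ψ r) * pdx (Ubar w Ψ) r)) q
        = pdt (pdt (Ubar w Ψ)) q := by
  -- basic smoothness facts
  have hm1 : ContDiff ℝ (⊤ : ℕ∞) (deriv m) := (hm.fderiv_right (by simp)).clm_apply contDiff_const
  -- Ψ maps Ωb into Ω
  have hΨΩ : ∀ q ∈ Ωb, Ψ q ∈ Ω := by
    intro q hq
    rw [← himage] at hq
    obtain ⟨p, hp, rfl⟩ := hq
    rw [hleft p hp]; exact hp
  -- u is smooth on Ωb
  have hu : ContDiffOn ℝ (⊤ : ℕ∞) (Ubar w Ψ) Ωb := hw.comp hΨ (fun r hr => hΨΩ r hr)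
  -- fderiv slice functions
  set Wx : ℝ × ℝ × ℝ → ℝ := fun r => fderiv ℝ w r (1, 0, 0) with hWxdef
  set Wt : ℝ × ℝ × ℝ → ℝ := fun r => fderiv ℝ w r (0, 0, 1) with hWtdef
  set Ux : ℝ × ℝ × ℝ → ℝ := fun r => fderiv ℝ (Ubar w Ψ) r (1, 0, 0) with hUxdef
  set Ut : ℝ × ℝ × ℝ → ℝ := fun r => fderiv ℝ (Ubar w Ψ) r (0, 0, 1) with hUtdef
  have hWxs : ContDiffOn ℝ (⊤ : ℕ∞) Wx Ω := contDiffOn_fderiv_apply hw hΩ _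
  have hWts : ContDiffOn ℝ (⊤ : ℕ∞) Wt Ω := contDiffOn_fderiv_apply hw hΩ _
  have hUxs : ContDiffOn ℝ (⊤ : ℕ∞) Ux Ωb := contDiffOn_fderiv_apply hu hΩb _
  have hUts : ContDiffOn ℝ (⊤ : ℕ∞) Ut Ωb := contDiffOn_fderiv_apply hu hΩb _
  have hwd : ∀ r ∈ Ω, DifferentiableAt ℝ w r := fun r hr =>
    (hw.differentiableOn (by simp)).differentiableAt (hΩ.mem_nhds hr)
  have hWxd : ∀ r ∈ Ω, DifferentiableAt ℝ Wx r := fun r hr =>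
    (hWxs.differentiableOn (by simp)).differentiableAt (hΩ.mem_nhds hr)
  have hWtd : ∀ r ∈ Ω, DifferentiableAt ℝ Wt r := fun r hr =>
    (hWts.differentiableOn (by simp)).differentiableAt (hΩ.mem_nhds hr)
  have hud : ∀ r ∈ Ωb, DifferentiableAt ℝ (Ubar w Ψ) r := fun r hr =>
    (hu.differentiableOn (by simp)).differentiableAt (hΩb.mem_nhds hr)
  have hUtd : ∀ r ∈ Ωb, DifferentiableAt ℝ Ut r := fun r hr =>
    (hUts.differentiableOn (by simp)).differentiableAt (hΩb.mem_nhds hr)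
  have hpdxw : ∀ r ∈ Ω, pdx w r = Wx r := fun r hr => pdx_eq (hwd r hr)
  have hpdtw : ∀ r ∈ Ω, pdt w r = Wt r := fun r hr => pdt_eq (hwd r hr)
  have hpdxu : ∀ r ∈ Ωb, pdx (Ubar w Ψ) r = Ux r := fun r hr => pdx_eq (hud r hr)
  have hpdtu : ∀ r ∈ Ωb, pdt (Ubar w Ψ) r = Ut r := fun r hr => pdt_eq (hud r hr)
  -- nonvanishing denominator on Ω, rephrased
  have hD' : ∀ r ∈ Ω, 1 - ε * deriv m (w r) * Wx r ≠ 0 := by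
    intro r hr; rw [← hpdxw r hr]; exact hD r hr
  -- w = u ∘ Φ on Ω
  have hwuΦ : ∀ r ∈ Ω, Ubar w Ψ (Φ r) = w r := by
    intro r hr; simp only [Ubar, hleft r hr]
  have hΦΩb : ∀ r ∈ Ω, Φ r ∈ Ωb := by
    intro r hr; rw [← himage]; exact Set.mem_image_of_mem Φ hr
  -- first derivatives of u at image points
  have hUxΦ : ∀ r ∈ Ω, Ux (Φ r) = Wx r / (1 - ε * deriv m (w r) * Wx r) := by
    intro r hr
    have hchain0 := (chain_slices hm ε hΩ hw hΦ hr (hud _ (hΦΩb r hr))).1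
    have hL : pdx (fun s => Ubar w Ψ (Φ s)) r = pdx w r :=
      pdx_congr_of_open hΩ hr hwuΦ
    rw [hL, hpdxw r hr, hpdxu _ (hΦΩb r hr)] at hchain0
    have hchain : Wx r = (1 - ε * deriv m (w r) * Wx r) * Ux (Φ r) := hchain0
    rw [eq_div_iff (hD' r hr)]
    linear_combination -hchain
  have hUtΦ : ∀ r ∈ Ω, Ut (Φ r) = Wt r / (1 - ε * deriv m (w r) * Wx r) := by
    intro r hr
    have hchain0 := (chain_slices hm ε hΩ hw hΦ hr (hud _ (hΦΩb r hr))).2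
    have hL : pdt (fun s => Ubar w Ψ (Φ s)) r = pdt w r :=
      pdt_congr_of_open hΩ hr hwuΦ
    rw [hL, hpdtw r hr, hpdxu _ (hΦΩb r hr), hpdtu _ (hΦΩb r hr)] at hchain0
    have hchain : Wt r = -(ε * deriv m (w r) * Wt r) * Ux (Φ r) + Ut (Φ r) := hchain0
    have hDr := hD' r hr
    have hUxc : Ux (Φ r) * (1 - ε * deriv m (w r) * Wx r) = Wx r := by
      rw [hUxΦ r hr, div_mul_cancel₀ _ hDr]
    rw [eq_div_iff hDr]
    linear_combination (-(1 - ε * deriv m (w r) * Wx r)) * hchain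
      + (ε * deriv m (w r) * Wt r) * hUxc
  -- the denominator 1 + ε m'(u) u_x never vanishes on Ωb
  have hden : ∀ r ∈ Ωb, 1 + ε * deriv m (Ubar w Ψ r) * Ux r ≠ 0 := by
    intro r hr
    have hp' : Ψ r ∈ Ω := hΨΩ r hr
    have h1 : Φ (Ψ r) = r := hright r hr
    have h2 : Ubar w Ψ r = w (Ψ r) := rfl
    have h3 : Ux r = Wx (Ψ r) / (1 - ε * deriv m (w (Ψ r)) * Wx (Ψ r)) := by
      have h4 := hUxΦ (Ψ r) hp'
      rw [h1] at h4; exact h4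
    have hDr := hD' _ hp'
    rw [h2, h3]
    have : 1 + ε * deriv m (w (Ψ r)) * (Wx (Ψ r) / (1 - ε * deriv m (w (Ψ r)) * Wx (Ψ r)))
        = 1 / (1 - ε * deriv m (w (Ψ r)) * Wx (Ψ r)) := by
      field_simp
      ring
    rw [this]
    exact one_div_ne_zero hDr
  intro q hq
  refine ⟨by rw [hpdxu q hq]; exact hden q hq, ?_⟩
  -- the base point
  set p : ℝ × ℝ × ℝ := Ψ q with hpdef
  have hp : p ∈ Ω := hΨΩ q hq
  have hqp : Φ p = q := hright q hq
  -- abbreviations at p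
  set m1 : ℝ := deriv m (w p) with hm1p
  set m2 : ℝ := deriv (deriv m) (w p) with hm2p
  set a : ℝ := Wx p with ha
  set b : ℝ := Wt p with hb
  set c : ℝ := fderiv ℝ Wx p (1, 0, 0) with hc
  set d : ℝ := fderiv ℝ Wx p (0, 0, 1) with hd
  have hDp : 1 - ε * m1 * a ≠ 0 := hD' p hp
  -- wave equation at p
  have hwtt : fderiv ℝ Wt p (0, 0, 1) = c := by
    have h1 : pdx (pdx w) p = pdx Wx p := pdx_congr_of_open hΩ hp hpdxw
    have h2 : pdt (pdt w) p = pdt Wt p := pdt_congr_of_open hΩ hp hpdtw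
    have h3 := hwave p hp
    rw [h1, h2, pdx_eq (hWxd p hp), pdt_eq (hWtd p hp)] at h3
    rw [← h3]
  -- symmetry of second derivatives at p
  have hwtx : fderiv ℝ Wt p (1, 0, 0) = d :=
    mixed_symm hw hΩ hp (0, 0, 1) (1, 0, 0)
  -- slice derivatives at p
  have hwdp := hwd p hp
  have hm1d : ∀ x : ℝ, HasDerivAt (deriv m) (deriv (deriv m) x) x := fun x =>
    ((hm1.differentiable (by simp)) x).hasDerivAt
  have hwx : HasDerivAt (fun s => w (s, p.2.1, p.2.2)) a p.1 := hasDerivAt_pdx hwdp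
  have hmx : HasDerivAt (fun s => deriv m (w (s, p.2.1, p.2.2))) (m2 * a) p.1 :=
    by have h := (hm1d (w (p.1, p.2.1, p.2.2))).comp p.1 hwx; exact h
  have hWxx : HasDerivAt (fun s => Wx (s, p.2.1, p.2.2)) c p.1 := hasDerivAt_pdx (hWxd p hp)
  have hWtx : HasDerivAt (fun s => Wt (s, p.2.1, p.2.2)) d p.1 := by
    have h := hasDerivAt_pdx (hWtd p hp); rwa [hwtx] at h
  have hwt : HasDerivAt (fun s => w (p.1, p.2.1, s)) b p.2.2 := hasDerivAt_pdt hwdp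
  have hmt : HasDerivAt (fun s => deriv m (w (p.1, p.2.1, s))) (m2 * b) p.2.2 :=
    by have h := (hm1d (w (p.1, p.2.1, p.2.2))).comp p.2.2 hwt; exact h
  have hWxt : HasDerivAt (fun s => Wx (p.1, p.2.1, s)) d p.2.2 := hasDerivAt_pdt (hWxd p hp)
  have hWtt : HasDerivAt (fun s => Wt (p.1, p.2.1, s)) c p.2.2 := by
    have h := hasDerivAt_pdt (hWtd p hp); rwa [hwtt] at h
  -- denominator slices
  have hDslx : HasDerivAt (fun s => 1 - ε * deriv m (w (s, p.2.1, p.2.2)) * Wx (s, p.2.1, p.2.2))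
      (-(ε * (m2 * a) * a + ε * m1 * c)) p.1 := by
    have h := (hasDerivAt_const p.1 (1 : ℝ)).sub ((hmx.const_mul ε).mul hWxx)
    refine h.congr_deriv ?_
    ring
  have hDslt : HasDerivAt (fun s => 1 - ε * deriv m (w (p.1, p.2.1, s)) * Wx (p.1, p.2.1, s))
      (-(ε * (m2 * b) * a + ε * m1 * d)) p.2.2 := by
    have h := (hasDerivAt_const p.2.2 (1 : ℝ)).sub ((hmt.const_mul ε).mul hWxt)
    refine h.congr_deriv ?_
    ring
  -- pulled-back flux G and time derivative A
  set G : ℝ × ℝ × ℝ → ℝ := fun r =>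
    ε * deriv m (w r) * Wt r ^ 2 / (1 - ε * deriv m (w r) * Wx r) + Wx r with hGdef
  set A : ℝ × ℝ × ℝ → ℝ := fun r => Wt r / (1 - ε * deriv m (w r) * Wx r) with hAdef
  have hGslx : HasDerivAt (fun s =>
      ε * deriv m (w (s, p.2.1, p.2.2)) * Wt (s, p.2.1, p.2.2) ^ 2
        / (1 - ε * deriv m (w (s, p.2.1, p.2.2)) * Wx (s, p.2.1, p.2.2)) + Wx (s, p.2.1, p.2.2))
      (((ε * (m2 * a) * b ^ 2 + ε * m1 * (2 * b * d)) * (1 - ε * m1 * a)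
          - ε * m1 * b ^ 2 * (-(ε * (m2 * a) * a + ε * m1 * c))) / (1 - ε * m1 * a) ^ 2 + c)
      p.1 := by
    have h := (((hmx.const_mul ε).mul (hWtx.pow 2)).div hDslx hDp).add hWxx
    refine h.congr_deriv ?_
    simp only [Pi.pow_apply, Pi.mul_apply]
    push_cast
    ring
  have hGx : pdx G p = ((ε * (m2 * a) * b ^ 2 + ε * m1 * (2 * b * d)) * (1 - ε * m1 * a)
      - ε * m1 * b ^ 2 * (-(ε * (m2 * a) * a + ε * m1 * c))) / (1 - ε * m1 * a) ^ 2 + c :=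
    hGslx.deriv
  have hAslx : HasDerivAt (fun s =>
      Wt (s, p.2.1, p.2.2) / (1 - ε * deriv m (w (s, p.2.1, p.2.2)) * Wx (s, p.2.1, p.2.2)))
      ((d * (1 - ε * m1 * a) - b * (-(ε * (m2 * a) * a + ε * m1 * c))) / (1 - ε * m1 * a) ^ 2)
      p.1 := hWtx.div hDslx hDp
  have hAx : pdx A p
      = (d * (1 - ε * m1 * a) - b * (-(ε * (m2 * a) * a + ε * m1 * c))) / (1 - ε * m1 * a) ^ 2 :=
    hAslx.deriv
  have hAslt : HasDerivAt (fun s =>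
      Wt (p.1, p.2.1, s) / (1 - ε * deriv m (w (p.1, p.2.1, s)) * Wx (p.1, p.2.1, s)))
      ((c * (1 - ε * m1 * a) - b * (-(ε * (m2 * b) * a + ε * m1 * d))) / (1 - ε * m1 * a) ^ 2)
      p.2.2 := hWtt.div hDslt hDp
  have hAt : pdt A p
      = (c * (1 - ε * m1 * a) - b * (-(ε * (m2 * b) * a + ε * m1 * d))) / (1 - ε * m1 * a) ^ 2 :=
    hAslt.deriv
  -- the flux function on Ωb
  set Fb : ℝ × ℝ × ℝ → ℝ := fun r =>
    (ε * deriv m (Ubar w Ψ r) * Ut r ^ 2 + Ux r)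
      / (1 + ε * deriv m (Ubar w Ψ r) * Ux r) with hFdef
  have hFs : ContDiffOn ℝ (⊤ : ℕ∞) Fb Ωb :=
    (((contDiffOn_const.mul (hm1.comp_contDiffOn hu)).mul (hUts.pow 2)).add hUxs).div
      (contDiffOn_const.add ((contDiffOn_const.mul (hm1.comp_contDiffOn hu)).mul hUxs)) hden
  -- reduce the goal to fderiv-based functions
  have hLHS : pdx (fun r =>
      (ε * deriv m (Ubar w Ψ r) * pdt (Ubar w Ψ) r ^ 2 + pdx (Ubar w Ψ) r)
        / (1 + ε * deriv m (Ubar w Ψ r) * pdx (Ubar w Ψ) r)) q = pdx Fb q :=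
    pdx_congr_of_open hΩb hq (fun r hr => by rw [hpdxu r hr, hpdtu r hr])
  have hRHS : pdt (pdt (Ubar w Ψ)) q = pdt Ut q :=
    pdt_congr_of_open hΩb hq (fun r hr => hpdtu r hr)
  rw [hLHS, hRHS]
  -- Fb ∘ Φ = G on Ω
  have hFG : ∀ r ∈ Ω, Fb (Φ r) = G r := by
    intro r hr
    have hDr := hD' r hr
    simp only [hFdef, hGdef, hwuΦ r hr, hUxΦ r hr, hUtΦ r hr]
    have h2 : 1 + ε * deriv m (w r) * (Wx r / (1 - ε * deriv m (w r) * Wx r))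
        = 1 / (1 - ε * deriv m (w r) * Wx r) := by field_simp; ring
    rw [h2, one_div, div_inv_eq_mul]
    field_simp
  -- chain rule for Fb
  have hFd : DifferentiableAt ℝ Fb q :=
    (hFs.differentiableOn (by simp)).differentiableAt (hΩb.mem_nhds hq)
  have hchF0 := (chain_slices hm ε hΩ hw hΦ hp (by rw [hqp]; exact hFd)).1
  have eF : pdx (fun r => Fb (Φ r)) p = pdx G p := pdx_congr_of_open hΩ hp hFG
  rw [eF, hqp] at hchF0
  have hchF : pdx G p = (1 - ε * m1 * a) * pdx Fb q := hchF0
  -- chain rule for Ut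
  have hchU0 := chain_slices hm ε hΩ hw hΦ hp (g := Ut) (by rw [hqp]; exact hUtd q hq)
  have eU1 : pdx (fun r => Ut (Φ r)) p = pdx A p :=
    pdx_congr_of_open hΩ hp (fun r hr => hUtΦ r hr)
  have eU2 : pdt (fun r => Ut (Φ r)) p = pdt A p :=
    pdt_congr_of_open hΩ hp (fun r hr => hUtΦ r hr)
  obtain ⟨hchU1', hchU2'⟩ := hchU0
  rw [eU1, hqp] at hchU1'
  rw [eU2, hqp] at hchU2'
  have hchU1 : pdx A p = (1 - ε * m1 * a) * pdx Ut q := hchU1'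
  have hchU2 : pdt A p = -(ε * m1 * b) * pdx Ut q + pdt Ut q := hchU2'
  -- solve for the derivatives at q
  have hF : pdx Fb q = (((ε * (m2 * a) * b ^ 2 + ε * m1 * (2 * b * d)) * (1 - ε * m1 * a)
      - ε * m1 * b ^ 2 * (-(ε * (m2 * a) * a + ε * m1 * c))) / (1 - ε * m1 * a) ^ 2 + c)
      / (1 - ε * m1 * a) := by
    rw [eq_div_iff hDp]
    linear_combination hGx - hchF
  have hUtq : pdx Ut q = ((d * (1 - ε * m1 * a) - b * (-(ε * (m2 * a) * a + ε * m1 * c)))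
      / (1 - ε * m1 * a) ^ 2) / (1 - ε * m1 * a) := by
    rw [eq_div_iff hDp]
    linear_combination hAx - hchU1
  have hUtt : pdt Ut q = (c * (1 - ε * m1 * a) - b * (-(ε * (m2 * b) * a + ε * m1 * d)))
      / (1 - ε * m1 * a) ^ 2
      + ε * m1 * b * (((d * (1 - ε * m1 * a) - b * (-(ε * (m2 * a) * a + ε * m1 * c)))
          / (1 - ε * m1 * a) ^ 2) / (1 - ε * m1 * a)) := by
    rw [← hUtq]
    linear_combination hAt - hchU2
  rw [hF, hUtt]
  have hDp' : 1 - ε * a * m1 ≠ 0 := by rwa [mul_right_comm] at hDp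
  field_simp
  ring
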